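/- arXiv:1301.1162 — 6 statements merged into one kernel-verified Lean document; each statement's English description precedes it below -/
import Mathlib

section
/- For every integer ℓ ≥ 0 and every real x > 1, the Chebyshev polynomial of the first kind satisfies T_ℓ(x) ≥ (1/2)·exp(2ℓ·√((x−1)/(x+1))). -/
/-!
Write `x = cosh (2u)` with `u = arcosh x / 2 ≥ 0`. Then `T_ℓ(x) = cosh (2ℓu) ≥ exp (2ℓu) / 2`, and
the half-angle formulas give `√((x - 1) / (x + 1)) = tanh u ≤ u`. The last inequality is
`y ≤ artanh y` for `y = tanh u`, the first term of the odd power series of `artanh`.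
-/

open Polynomial Real

namespace Real

theorem self_le_artanh {y : ℝ} (hy₀ : 0 ≤ y) (hy₁ : y < 1) : y ≤ artanh y := by
  have hseries := hasSum_log_sub_log_of_abs_lt_one (abs_lt.2 ⟨by linarith, hy₁⟩)
  have hfirst := le_hasSum hseries 0 fun k _ ↦ by positivity
  rw [artanh_eq_half_log ⟨by linarith, hy₁.le⟩, log_div (by linarith) (by linarith)]
  norm_num at hfirst
  linarith

theorem tanh_nonneg {u : ℝ} (hu : 0 ≤ u) : 0 ≤ tanh u := by
  rw [tanh_eq_sinh_div_cosh]
  exact div_nonneg (sinh_nonneg_iff.2 hu) (cosh_pos u).le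

theorem tanh_le_self {u : ℝ} (hu : 0 ≤ u) : tanh u ≤ u := by
  simpa only [artanh_tanh] using self_le_artanh (tanh_nonneg hu) (tanh_lt_one u)

theorem sqrt_cosh_two_mul_sub_one_div_add_one (u : ℝ) :
    √((cosh (2 * u) - 1) / (cosh (2 * u) + 1)) = |tanh u| := by
  have hcosh : cosh u ^ 2 = sinh u ^ 2 + 1 := cosh_sq u
  rw [← sqrt_sq_eq_abs, tanh_eq_sinh_div_cosh, div_pow, cosh_two_mul, hcosh]
  congr 1
  field_simp
  ring

theorem half_mul_exp_le_cosh (t : ℝ) : 1 / 2 * exp t ≤ cosh t := by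
  rw [cosh_eq]
  linarith [exp_pos (-t)]

end Real

theorem chebyshev_lower_bound (ℓ : ℕ) (x : ℝ) (hx : 1 < x) :
    (1 / 2) * Real.exp (2 * ℓ * Real.sqrt ((x - 1) / (x + 1))) ≤
      (Polynomial.Chebyshev.T ℝ ℓ).eval x := by
  set u := arcosh x / 2
  have hu : 0 ≤ u := div_nonneg (arcosh_nonneg hx.le) zero_le_two
  have hxu : x = cosh (2 * u) := by
    rw [mul_div_cancel₀ _ two_ne_zero, cosh_arcosh hx.le]
  rw [hxu, Chebyshev.T_real_cosh, sqrt_cosh_two_mul_sub_one_div_add_one,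
    abs_of_nonneg (tanh_nonneg hu), Int.cast_natCast]
  calc 1 / 2 * exp (2 * ℓ * tanh u)
      ≤ 1 / 2 * exp (ℓ * (2 * u)) := by
        gcongr 1 / 2 * exp ?_
        nlinarith [tanh_le_self hu, Nat.cast_nonneg (α := ℝ) ℓ]
    _ ≤ cosh (ℓ * (2 * u)) := half_mul_exp_le_cosh _
end

section
/- Let ε₀ < ε₁ ≤ u be reals with u > ε₁ and let ℓ ≥ 0 be an integer. Define C_ℓ(y) = T_ℓ(f(y))/T_ℓ(f(ε₀)) where f(y) = (u + ε₁ − 2y)/(u − ε₁) and T_ℓ is the Chebyshev polynomial. Then C_ℓ(ε₀) = 1 and for all y ∈ [ε₁, u], |C_ℓ(y)| ≤ 2·exp(−2ℓ·√((ε₁ − ε₀)/(u − ε₀))). -/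
/-!
If `r = √((x - 1)/(x + 1))` with `x ≥ 1`, then `x = cosh (2 artanh r)`, so
`T_ℓ(x) = cosh (2ℓ artanh r) ≥ exp (2ℓ artanh r)/2 ≥ exp (2ℓr)/2` because `artanh r ≥ r`.
The affine map `f` sends `[ε₁, u]` onto `[-1, 1]`, where `|T_ℓ| ≤ 1`, and sends `ε₀` to a point
`x ≥ 1` with `(x - 1)/(x + 1) = (ε₁ - ε₀)/(u - ε₀)`.
-/

open Real Polynomial.Chebyshev

theorem Real.self_le_artanh_s4 {r : ℝ} (hr₀ : 0 ≤ r) (hr₁ : r < 1) : r ≤ artanh r := by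
  have hseries := hasSum_log_sub_log_of_abs_lt_one (x := r) (by rwa [abs_of_nonneg hr₀])
  have hfirst : 2 * r ≤ log (1 + r) - log (1 - r) := by
    simpa using le_hasSum hseries 0 fun k _ => by positivity
  rw [artanh_eq_half_log ⟨by linarith, hr₁.le⟩, log_div (by linarith) (by linarith)]
  linarith

theorem Real.cosh_two_mul_artanh {r : ℝ} (hr : r ∈ Set.Ioo (-1) 1) :
    cosh (2 * artanh r) = (1 + r ^ 2) / (1 - r ^ 2) := by
  have hpos : 0 < 1 - r ^ 2 := by nlinarith [hr.1, hr.2]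
  rw [cosh_two_mul, cosh_artanh hr, sinh_artanh hr, div_pow, div_pow, sq_sqrt hpos.le]
  ring

theorem Real.exp_le_two_mul_cosh (x : ℝ) : exp x ≤ 2 * cosh x := by
  rw [cosh_eq]
  linarith [exp_pos (-x)]

theorem Polynomial.Chebyshev.exp_le_two_mul_eval_T_real {x : ℝ} (hx : 1 ≤ x) (n : ℕ) :
    exp (2 * n * √((x - 1) / (x + 1))) ≤ 2 * (T ℝ n).eval x := by
  set r := √((x - 1) / (x + 1))
  have hr₀ : 0 ≤ r := sqrt_nonneg _
  have hr_sq : r ^ 2 = (x - 1) / (x + 1) := sq_sqrt (div_nonneg (by linarith) (by linarith))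
  have hr₁ : r < 1 := by
    rw [← sq_lt_one_iff₀ hr₀, hr_sq, div_lt_one (by linarith)]
    linarith
  have hx_cosh : x = cosh (2 * artanh r) := by
    rw [cosh_two_mul_artanh ⟨by linarith, hr₁⟩, hr_sq]
    field_simp
    ring
  calc exp (2 * n * r) ≤ exp (n * (2 * artanh r)) :=
        exp_le_exp.2 (by nlinarith [self_le_artanh_s4 hr₀ hr₁, n.cast_nonneg (α := ℝ)])
    _ ≤ 2 * cosh (n * (2 * artanh r)) := exp_le_two_mul_cosh _
    _ = 2 * (T ℝ n).eval x := by rw [hx_cosh, T_real_cosh]; norm_cast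

theorem Polynomial.Chebyshev.eval_T_real_pos (n : ℤ) {x : ℝ} (hx : 1 ≤ x) : 0 < (T ℝ n).eval x :=
  one_pos.trans_le (one_le_eval_T_real n hx)

theorem Polynomial.Chebyshev.abs_eval_T_real_div_le {x y : ℝ} (hx : 1 ≤ x) (hy : |y| ≤ 1)
    (n : ℕ) : |(T ℝ n).eval y / (T ℝ n).eval x| ≤ 2 * exp (-2 * n * √((x - 1) / (x + 1))) := by
  have hTx := eval_T_real_pos n hx
  calc |(T ℝ n).eval y / (T ℝ n).eval x| = |(T ℝ n).eval y| / (T ℝ n).eval x := by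
        rw [abs_div, abs_of_pos hTx]
    _ ≤ 1 / (T ℝ n).eval x := by gcongr; exact abs_eval_T_real_le_one n hy
    _ ≤ 2 / exp (2 * n * √((x - 1) / (x + 1))) := by
        rw [div_le_div_iff₀ hTx (exp_pos _)]
        linarith [exp_le_two_mul_eval_T_real hx n]
    _ = 2 * exp (-2 * n * √((x - 1) / (x + 1))) := by
        rw [neg_mul, neg_mul, exp_neg, div_eq_mul_inv]

/-- The rescaled Chebyshev polynomial `C_ℓ(y) = T_ℓ(f(y))/T_ℓ(f(ε₀))`, with
`f(y) = (u + ε₁ − 2y)/(u − ε₁)`, equals 1 at `ε₀` and is exponentially small on `[ε₁, u]`. -/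
theorem rescaled_chebyshev_AGSP_bound (ε₀ ε₁ u : ℝ) (h01 : ε₀ < ε₁) (h1u : ε₁ < u) (ℓ : ℕ)
    (f : ℝ → ℝ) (hf : ∀ y, f y = (u + ε₁ - 2 * y) / (u - ε₁))
    (C : ℝ → ℝ)
    (hC : ∀ y, C y = (Polynomial.Chebyshev.T ℝ ℓ).eval (f y) /
      (Polynomial.Chebyshev.T ℝ ℓ).eval (f ε₀)) :
    C ε₀ = 1 ∧
      ∀ y ∈ Set.Icc ε₁ u,
        |C y| ≤ 2 * Real.exp (-2 * ℓ * Real.sqrt ((ε₁ - ε₀) / (u - ε₀))) := by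
  have hu : 0 < u - ε₁ := sub_pos.2 h1u
  have hfε₀ : 1 ≤ f ε₀ := by
    rw [hf, le_div_iff₀ hu]
    linarith
  have hratio : (f ε₀ - 1) / (f ε₀ + 1) = (ε₁ - ε₀) / (u - ε₀) := by
    rw [hf, div_sub_one hu.ne', div_add_one hu.ne', div_div_div_cancel_right₀ hu.ne',
      div_eq_div_iff (by linarith : (0 : ℝ) < _).ne' (by linarith : (0 : ℝ) < _).ne']
    ring
  refine ⟨by rw [hC, div_self (eval_T_real_pos ℓ hfε₀).ne'], ?_⟩
  rintro y ⟨hε₁y, hyu⟩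
  have hfy : |f y| ≤ 1 := by
    rw [hf, abs_div, abs_of_pos hu, div_le_one hu, abs_le]
    constructor <;> linarith
  rw [hC, ← hratio]
  exact abs_eval_T_real_div_le hfε₀ hfy ℓ
end

section
/- Let K be a self-adjoint operator on a finite-dimensional Hilbert space, let Γ be a unit vector with KΓ = Γ, and suppose K maps the orthogonal complement of Γ into itself with ‖Kw‖² ≤ Δ·‖w‖² there. If φ is a unit vector with |⟨Γ, φ⟩| ≥ μ > 0, then the normalized vector Kφ/‖Kφ‖ satisfies |⟨Γ, Kφ/‖Kφ‖⟩|² ≥ μ²/(μ² + Δ(1 − μ²)). -/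
/-!
Write `φ = c • Γ + w` with `c = ⟪Γ, φ⟫` and `w ⊥ Γ`. Then `K φ = c • Γ + K w` with `K w ⊥ Γ`, so
`K φ` keeps the overlap `c` with `Γ` while `‖K φ‖² = |c|² + ‖K w‖² ≤ |c|² + Δ (1 - |c|²)`.
Hence the normalized overlap is at least `t / (t + Δ (1 - t))` for `t = |c|² ≥ μ²`, and this
bound is increasing in `t`.
-/

open scoped InnerProductSpace

lemma div_add_mul_one_sub_le_div {s t n Δ : ℝ} (hs : 0 < s) (hst : s ≤ t) (hΔ : 0 ≤ Δ)
    (hn : 0 < n) (hnt : n ≤ t + Δ * (1 - t)) :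
    s / (s + Δ * (1 - s)) ≤ t / n := by
  have hden : 0 < s + Δ * (1 - s) := by nlinarith
  rw [div_le_div_iff₀ hden hn]
  nlinarith [mul_nonneg hΔ (sub_nonneg.2 hst)]

section InnerProductSpace

variable {𝕜 E : Type*} [RCLike 𝕜] [NormedAddCommGroup E] [InnerProductSpace 𝕜 E]

lemma inner_sub_inner_smul_self_eq_zero {Γ : E} (hΓ : ‖Γ‖ = 1) (φ : E) :
    ⟪Γ, φ - ⟪Γ, φ⟫_𝕜 • Γ⟫_𝕜 = 0 := by
  rw [inner_sub_right, inner_smul_right, inner_self_eq_norm_sq_to_K, hΓ]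
  simp

lemma norm_smul_add_sq_of_inner_eq_zero {Γ w : E} (hΓ : ‖Γ‖ = 1) (hw : ⟪Γ, w⟫_𝕜 = 0) (c : 𝕜) :
    ‖c • Γ + w‖ ^ 2 = ‖c‖ ^ 2 + ‖w‖ ^ 2 := by
  have hperp : ⟪c • Γ, w⟫_𝕜 = 0 := by rw [inner_smul_left, hw, mul_zero]
  rw [sq, sq, sq, norm_add_sq_eq_norm_sq_add_norm_sq_of_inner_eq_zero _ _ hperp, norm_smul, hΓ,
    mul_one]

lemma norm_inner_inv_norm_smul_sq (Γ v : E) :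
    ‖⟪Γ, ((‖v‖ : 𝕜)⁻¹ • v)⟫_𝕜‖ ^ 2 = ‖⟪Γ, v⟫_𝕜‖ ^ 2 / ‖v‖ ^ 2 := by
  rw [inner_smul_right, norm_mul, norm_inv, RCLike.norm_ofReal, abs_norm]
  ring

variable {K : E →ₗ[𝕜] E} {Γ : E}

lemma map_eq_inner_smul_add_map_sub (hfix : K Γ = Γ) (φ : E) :
    K φ = ⟪Γ, φ⟫_𝕜 • Γ + K (φ - ⟪Γ, φ⟫_𝕜 • Γ) := by
  rw [map_sub, map_smul, hfix]
  abel

lemma inner_map_eq_inner_of_map_orthogonal (hΓ : ‖Γ‖ = 1) (hfix : K Γ = Γ)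
    (hperp : ∀ w : E, ⟪Γ, w⟫_𝕜 = 0 → ⟪Γ, K w⟫_𝕜 = 0) (φ : E) :
    ⟪Γ, K φ⟫_𝕜 = ⟪Γ, φ⟫_𝕜 := by
  rw [map_eq_inner_smul_add_map_sub hfix, inner_add_right, inner_smul_right,
    inner_self_eq_norm_sq_to_K, hΓ, hperp _ (inner_sub_inner_smul_self_eq_zero (𝕜 := 𝕜) hΓ φ)]
  simp

lemma norm_map_sq_le (hΓ : ‖Γ‖ = 1) (hfix : K Γ = Γ) {Δ : ℝ}
    (hinv : ∀ w : E, ⟪Γ, w⟫_𝕜 = 0 → ⟪Γ, K w⟫_𝕜 = 0 ∧ ‖K w‖ ^ 2 ≤ Δ * ‖w‖ ^ 2) (φ : E) :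
    ‖K φ‖ ^ 2 ≤ ‖⟪Γ, φ⟫_𝕜‖ ^ 2 + Δ * (‖φ‖ ^ 2 - ‖⟪Γ, φ⟫_𝕜‖ ^ 2) := by
  set c := ⟪Γ, φ⟫_𝕜
  have hw := inner_sub_inner_smul_self_eq_zero (𝕜 := 𝕜) hΓ φ
  obtain ⟨hKw, hKw_le⟩ := hinv _ hw
  have hφ : ‖φ‖ ^ 2 = ‖c‖ ^ 2 + ‖φ - c • Γ‖ ^ 2 := by
    rw [← norm_smul_add_sq_of_inner_eq_zero hΓ hw, add_sub_cancel]
  rw [map_eq_inner_smul_add_map_sub hfix, norm_smul_add_sq_of_inner_eq_zero hΓ hKw, hφ]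
  linarith

end InnerProductSpace

theorem agsp_overlap_improvement_general
    {E : Type*} [NormedAddCommGroup E] [InnerProductSpace ℂ E]
    (K : E →ₗ[ℂ] E) (Γ : E) (hΓ : ‖Γ‖ = 1) (hfix : K Γ = Γ)
    (Δ : ℝ) (hΔ : 0 ≤ Δ)
    (hinv : ∀ w : E, ⟪Γ, w⟫_ℂ = 0 → ⟪Γ, K w⟫_ℂ = 0 ∧ ‖K w‖ ^ 2 ≤ Δ * ‖w‖ ^ 2)
    (φ : E) (hφ : ‖φ‖ = 1) (μ : ℝ) (hμ : 0 < μ) (hoverlap : μ ≤ ‖⟪Γ, φ⟫_ℂ‖) :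
    μ ^ 2 / (μ ^ 2 + Δ * (1 - μ ^ 2)) ≤
      ‖⟪Γ, ((‖K φ‖ : ℂ)⁻¹ • K φ)⟫_ℂ‖ ^ 2 := by
  have hinner := inner_map_eq_inner_of_map_orthogonal hΓ hfix (fun w hw => (hinv w hw).1) φ
  have hKφ_le : ‖K φ‖ ^ 2 ≤ ‖⟪Γ, φ⟫_ℂ‖ ^ 2 + Δ * (1 - ‖⟪Γ, φ⟫_ℂ‖ ^ 2) := by
    simpa [hφ] using norm_map_sq_le hΓ hfix hinv φ
  have hKφ_pos : 0 < ‖K φ‖ :=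
    calc 0 < μ := hμ
      _ ≤ ‖⟪Γ, K φ⟫_ℂ‖ := hinner ▸ hoverlap
      _ ≤ ‖K φ‖ := by simpa [hΓ] using norm_inner_le_norm Γ (K φ)
  calc μ ^ 2 / (μ ^ 2 + Δ * (1 - μ ^ 2)) ≤ ‖⟪Γ, K φ⟫_ℂ‖ ^ 2 / ‖K φ‖ ^ 2 :=
        hinner ▸ div_add_mul_one_sub_le_div (by positivity) (pow_le_pow_left₀ hμ.le hoverlap 2)
          hΔ (by positivity) hKφ_le
    _ = ‖⟪Γ, ((‖K φ‖ : ℂ)⁻¹ • K φ)⟫_ℂ‖ ^ 2 := (norm_inner_inv_norm_smul_sq Γ (K φ)).symm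

/-- AGSP overlap-improvement: applying `K` to a state with overlap `μ` with the fixed
ground state `Γ` yields a normalized state with squared overlap at least
`μ²/(μ² + Δ(1 − μ²))`. -/
theorem agsp_overlap_improvement
    {E : Type*} [NormedAddCommGroup E] [InnerProductSpace ℂ E] [FiniteDimensional ℂ E]
    (K : E →ₗ[ℂ] E) (Γ : E) (hΓ : ‖Γ‖ = 1) (hfix : K Γ = Γ)
    (Δ : ℝ) (hΔ : 0 ≤ Δ)
    (hinv : ∀ w : E, ⟪Γ, w⟫_ℂ = 0 → ⟪Γ, K w⟫_ℂ = 0 ∧ ‖K w‖ ^ 2 ≤ Δ * ‖w‖ ^ 2)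
    (φ : E) (hφ : ‖φ‖ = 1) (μ : ℝ) (hμ : 0 < μ) (hoverlap : μ ≤ ‖⟪Γ, φ⟫_ℂ‖) :
    μ ^ 2 / (μ ^ 2 + Δ * (1 - μ ^ 2)) ≤
      ‖⟪Γ, ((‖K φ‖ : ℂ)⁻¹ • K φ)⟫_ℂ‖ ^ 2 :=
  agsp_overlap_improvement_general K Γ hΓ hfix Δ hΔ hinv φ hφ μ hμ hoverlap
end

section
/- Let (λᵢ)_{i≥1} be a nonincreasing sequence of nonnegative reals summing to 1 (Schmidt coefficients squared), and suppose there is an increasing sequence of integers R₀ ≤ R₁ ≤ ... such that Σ_{i ≤ R_k} λᵢ ≥ 1 − C·2^{−k} for all k ≥ 0 and some constant C with C·2⁰ ≤ 1. Then the entropy S = −Σᵢ λᵢ log λᵢ satisfies S ≤ log R₀ + Σ_{k≥1} C·2^{−(k−1)}·log R_k + O(1), provided the series converges. -/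
/-!
Cut the indices into the blocks `[R k, R (k+1))`. Block `k` carries mass `m ≤ C 2^{-k}` and has
fewer than `R (k+1)` elements, so concavity of `-x log x` bounds its entropy by
`m log R (k+1) - m log m ≤ C 2^{-k} log R (k+1) + 2 √m`, and the terms `2 √m` sum to a geometric
series. Indices beyond every `R K` are handled by letting `K → ∞`: the mass past `R K` tends to `0`.
-/

open Real Finset Filter Topology

lemma Real.negMulLog_le_two_mul_sqrt {x : ℝ} (hx : 0 ≤ x) : negMulLog x ≤ 2 * √x := by
  rcases hx.eq_or_lt with rfl | hx
  · simp
  have hs : 0 < √x := sqrt_pos.2 hx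
  calc negMulLog x = 2 * (x * log (√x)⁻¹) := by
        rw [log_inv, log_sqrt hx.le, negMulLog]; ring
    _ ≤ 2 * (x * (√x)⁻¹) := by
        gcongr
        linarith [log_le_sub_one_of_pos (inv_pos.2 hs)]
    _ = 2 * √x := by rw [← div_eq_mul_inv, div_sqrt]

lemma Real.sum_negMulLog_le_mul_log_card_add_negMulLog {ι : Type*} {t : Finset ι} {p : ι → ℝ}
    (hp : ∀ i ∈ t, 0 ≤ p i) :
    ∑ i ∈ t, negMulLog (p i) ≤ (∑ i ∈ t, p i) * log #t + negMulLog (∑ i ∈ t, p i) := by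
  rcases t.eq_empty_or_nonempty with rfl | ht
  · simp
  have hn : (0 : ℝ) < #t := by exact_mod_cast ht.card_pos
  have hjensen := concaveOn_negMulLog.le_map_sum (t := t) (w := fun _ => (#t : ℝ)⁻¹) (p := p)
    (fun _ _ => by positivity) (by simp [hn.ne']) (fun i hi => Set.mem_Ici.2 (hp i hi))
  simp only [smul_eq_mul, ← mul_sum, inv_mul_le_iff₀ hn] at hjensen
  refine hjensen.trans_eq ?_
  set m := ∑ i ∈ t, p i
  have hm : 0 ≤ m := sum_nonneg hp
  rcases hm.eq_or_lt with hm0 | hm0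
  · simp [← hm0]
  · rw [negMulLog, negMulLog, log_mul (by positivity) hm0.ne', log_inv]
    field_simp
    ring

lemma Real.sum_negMulLog_le_of_sum_le {ι : Type*} {t : Finset ι} {p : ι → ℝ} {n : ℕ} {δ : ℝ}
    (hp : ∀ i ∈ t, 0 ≤ p i) (ht : #t ≤ n) (hδ : ∑ i ∈ t, p i ≤ δ) :
    ∑ i ∈ t, negMulLog (p i) ≤ δ * log n + 2 * √δ := by
  have hm : 0 ≤ ∑ i ∈ t, p i := sum_nonneg hp
  have hlog : log #t ≤ log n := by
    rcases (#t).eq_zero_or_pos with h0 | h0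
    · simpa [h0] using log_natCast_nonneg n
    · exact log_le_log (by exact_mod_cast h0) (by exact_mod_cast ht)
  calc ∑ i ∈ t, negMulLog (p i)
      ≤ (∑ i ∈ t, p i) * log #t + negMulLog (∑ i ∈ t, p i) :=
        sum_negMulLog_le_mul_log_card_add_negMulLog hp
    _ ≤ δ * log n + 2 * √δ :=
        add_le_add (mul_le_mul hδ hlog (log_natCast_nonneg _) (hm.trans hδ))
          ((negMulLog_le_two_mul_sqrt hm).trans (by gcongr))

section
variable {lam : ℕ → ℝ}

lemma sum_Ico_le_of_one_sub_le_sum_range (hnn : ∀ i, 0 ≤ lam i) (hsum : Summable lam)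
    (h1 : ∑' i, lam i = 1) {a : ℕ} {δ : ℝ} (ha : 1 - δ ≤ ∑ i ∈ range a, lam i) (b : ℕ) :
    ∑ i ∈ Ico a b, lam i ≤ δ := by
  have hdisj : Disjoint (range a) (Ico a b) := by
    simp only [disjoint_left, mem_range, mem_Ico]
    omega
  have := hsum.sum_le_tsum (range a ∪ Ico a b) fun i _ => hnn i
  rw [sum_union hdisj, h1] at this
  linarith

lemma sum_range_negMulLog_le_sum_range_add (hnn : ∀ i, 0 ≤ lam i) (hsum : Summable lam)
    (h1 : ∑' i, lam i = 1) {a : ℕ} {δ : ℝ} (ha : 1 - δ ≤ ∑ i ∈ range a, lam i) (N : ℕ) :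
    ∑ i ∈ range N, negMulLog (lam i) ≤
      ∑ i ∈ range a, negMulLog (lam i) + (δ * log N + 2 * √δ) := by
  have hle : ∀ i, lam i ≤ 1 := fun i => h1 ▸ hsum.le_tsum i fun j _ => hnn j
  have htail := sum_negMulLog_le_of_sum_le (t := Ico a (max a N)) (n := N) (fun i _ => hnn i)
    (by simp) (sum_Ico_le_of_one_sub_le_sum_range hnn hsum h1 ha _)
  calc ∑ i ∈ range N, negMulLog (lam i)
      ≤ ∑ i ∈ range (max a N), negMulLog (lam i) :=
        sum_le_sum_of_subset_of_nonneg (range_subset_range.2 (le_max_right a N))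
          fun i _ _ => negMulLog_nonneg (hnn i) (hle i)
    _ = ∑ i ∈ range a, negMulLog (lam i) + ∑ i ∈ Ico a (max a N), negMulLog (lam i) :=
        (sum_range_add_sum_Ico _ (le_max_left a N)).symm
    _ ≤ _ := by gcongr

variable {R : ℕ → ℕ} {ε : ℕ → ℝ}

lemma sum_range_negMulLog_le (hnn : ∀ i, 0 ≤ lam i) (hsum : Summable lam)
    (h1 : ∑' i, lam i = 1) (hR : Monotone R) (hε : ∀ k, 1 - ε k ≤ ∑ i ∈ range (R k), lam i)
    (K : ℕ) :
    ∑ i ∈ range (R K), negMulLog (lam i) ≤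
      log (R 0) + 2 + ∑ k ∈ range K, (ε k * log (R (k + 1)) + 2 * √(ε k)) := by
  induction K with
  | zero =>
    simpa using sum_negMulLog_le_of_sum_le (t := range (R 0)) (n := R 0) (δ := 1)
      (fun i _ => hnn i) (by simp) (h1 ▸ hsum.sum_le_tsum _ fun i _ => hnn i)
  | succ K ih =>
    have hblock := sum_negMulLog_le_of_sum_le (t := Ico (R K) (R (K + 1))) (n := R (K + 1))
      (fun i _ => hnn i) (by simp) (sum_Ico_le_of_one_sub_le_sum_range hnn hsum h1 (hε K) _)
    rw [← sum_range_add_sum_Ico _ (hR K.le_succ), sum_range_succ]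
    linarith

theorem tsum_negMulLog_le (hnn : ∀ i, 0 ≤ lam i) (hsum : Summable lam)
    (h1 : ∑' i, lam i = 1) (hR : Monotone R) (hε : ∀ k, 1 - ε k ≤ ∑ i ∈ range (R k), lam i)
    (hlog : Summable fun k => ε k * log (R (k + 1))) (hsqrt : Summable fun k => √(ε k)) :
    ∑' i, negMulLog (lam i) ≤
      log (R 0) + ∑' k, ε k * log (R (k + 1)) + (2 + 2 * ∑' k, √(ε k)) := by
  have hε0 (k : ℕ) : 0 ≤ ε k := by
    simpa using sum_Ico_le_of_one_sub_le_sum_range hnn hsum h1 (hε k) (R k)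
  have hblocks (K : ℕ) : ∑ i ∈ range (R K), negMulLog (lam i) ≤
      log (R 0) + ∑' k, ε k * log (R (k + 1)) + (2 + 2 * ∑' k, √(ε k)) := by
    have hsum_le := (hlog.add (hsqrt.mul_left 2)).sum_le_tsum (range K) fun k _ =>
      add_nonneg (mul_nonneg (hε0 k) (log_natCast_nonneg _)) (by positivity)
    rw [hlog.tsum_add (hsqrt.mul_left 2), tsum_mul_left] at hsum_le
    linarith [sum_range_negMulLog_le hnn hsum h1 hR hε K]
  have hsmall (N : ℕ) : Tendsto (fun K => ε K * log N + 2 * √(ε K)) atTop (𝓝 0) := by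
    have hs := hsqrt.tendsto_atTop_zero
    simpa [sq_sqrt, hε0] using ((hs.pow 2).mul_const (log N)).add (hs.const_mul 2)
  have hle : ∀ i, lam i ≤ 1 := fun i => h1 ▸ hsum.le_tsum i fun j _ => hnn j
  refine tsum_le_of_sum_range_le (fun i => negMulLog_nonneg (hnn i) (hle i)) fun N => ?_
  refine ge_of_tendsto' (by simpa using tendsto_const_nhds.add (hsmall N)) fun K => ?_
  linarith [sum_range_negMulLog_le_sum_range_add hnn hsum h1 (hε K) N, hblocks K]

end

lemma two_rpow_neg_natCast (k : ℕ) : (2 : ℝ) ^ (-(k : ℝ)) = 2⁻¹ ^ k := by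
  rw [rpow_neg zero_le_two, rpow_natCast, inv_pow]

/-- Entropy bound from a sequence of low-rank approximations: if the top `R k` Schmidt
weights capture all but `C·2^{-k}` of the mass, the entropy is bounded by
`log R₀ + Σ_{k≥1} C·2^{-(k-1)} log R_k + O(1)`. -/
theorem entropy_bound_from_rank_sequence :
    ∃ c : ℝ, ∀ (lam : ℕ → ℝ) (R : ℕ → ℕ) (C : ℝ),
      (∀ i, 0 ≤ lam i) → Antitone lam → Summable lam → (∑' i, lam i) = 1 →
      Monotone R → 0 ≤ C → C * 2 ^ (-(0 : ℝ)) ≤ 1 →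
      (∀ k : ℕ, 1 - C * 2 ^ (-(k : ℝ)) ≤ ∑ i ∈ Finset.range (R k), lam i) →
      Summable (fun i => -(lam i * Real.log (lam i))) →
      Summable (fun k : ℕ => C * 2 ^ (-((k : ℝ) + 1 - 1)) * Real.log (R (k + 1))) →
      (∑' i, -(lam i * Real.log (lam i))) ≤
        Real.log (R 0) +
          (∑' k : ℕ, C * 2 ^ (-((k : ℝ) + 1 - 1)) * Real.log (R (k + 1))) + c := by
  refine ⟨10, fun lam R C hnn _ hsum h1 hR _ hC1 hrank _ hlog => ?_⟩
  set ε : ℕ → ℝ := fun k => C * 2 ^ (-(k : ℝ))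
  have hgeom : Summable fun k : ℕ => (3 / 4 : ℝ) ^ k :=
    summable_geometric_of_lt_one (by norm_num) (by norm_num)
  have hsqrt_le (k : ℕ) : √(ε k) ≤ (3 / 4) ^ k := by
    refine sqrt_le_iff.2 ⟨by positivity, ?_⟩
    calc ε k = C * 2⁻¹ ^ k := by simp only [ε, two_rpow_neg_natCast]
      _ ≤ 1 * (9 / 16) ^ k := by
          gcongr
          · simpa using hC1
          · norm_num
      _ = ((3 / 4) ^ k) ^ 2 := by rw [one_mul, ← pow_mul, mul_comm, pow_mul]; norm_num
  have hsqrt : Summable fun k => √(ε k) := hgeom.of_nonneg_of_le (fun _ => sqrt_nonneg _) hsqrt_le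
  have hsqrt_tsum : ∑' k, √(ε k) ≤ 4 := by
    refine (hsqrt.tsum_le_tsum hsqrt_le hgeom).trans_eq ?_
    rw [tsum_geometric_of_lt_one (by norm_num) (by norm_num)]
    norm_num
  simp only [add_sub_cancel_right] at hlog ⊢
  calc ∑' i, -(lam i * log (lam i)) = ∑' i, negMulLog (lam i) := by simp [negMulLog_eq_neg]
    _ ≤ log (R 0) + ∑' k, ε k * log (R (k + 1)) + (2 + 2 * ∑' k, √(ε k)) :=
        tsum_negMulLog_le hnn hsum h1 hR hrank hlog hsqrt
    _ ≤ _ := by linarith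
end

section
/- Let H₁, …, H_n be operators on a finite-dimensional Hilbert space, each with operator norm at most 1, and with the 'locality' property that for any product W of i of the Hⱼ's, at most 2i of the operators H₁,…,H_n fail to commute with W. Let S = Σⱼ Hⱼ and A a sum of a subset of the Hⱼ's with ‖A‖-relevant terms included, and define the iterated commutators Q₀ = A, Q_{i} = [S − A, Q_{i−1}]. Then Q_i is a sum of at most 2·4^i·i! products of the Hⱼ's, and hence ‖Q_i‖ ≤ 2·4^i·i!. -/
private lemma sum_pair_flatMap {α M : Type*} [AddCommMonoid M] (l : List α) (f g : α → M) :
    (l.flatMap (fun a => [f a, g a])).sum = (l.map (fun a => f a + g a)).sum := by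
  induction l with
  | nil => simp
  | cons a t ih => simp [ih, add_assoc]

private lemma length_pair_flatMap {α M : Type*} (l : List α) (f g : α → M) :
    (l.flatMap (fun a => [f a, g a])).length = 2 * l.length := by
  induction l with
  | nil => simp
  | cons a t ih => simp [ih]; omega

private lemma list_norm_sum_le {E : Type*} [NormedAddCommGroup E] :
    ∀ (ℓ : List E), (∀ x ∈ ℓ, ‖x‖ ≤ 1) → ‖ℓ.sum‖ ≤ ℓ.length := by
  intro ℓ
  induction ℓ with
  | nil => simp
  | cons a t ih =>
      intro h
      simp only [List.sum_cons, List.length_cons]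
      calc ‖a + t.sum‖ ≤ ‖a‖ + ‖t.sum‖ := norm_add_le _ _
        _ ≤ 1 + t.length := add_le_add (h a (by simp)) (ih fun x hx => h x (by simp [hx]))
        _ = (t.length + 1 : ℕ) := by push_cast; ring

/-- Norm bound on iterated commutators `Q₀ = A`, `Q_{i} = [S − A, Q_{i−1}]` for a sum
`S = Σⱼ Hⱼ` of norm-one local terms, where `A` is a sum of two of the terms and any product
of `i` of the `Hⱼ`'s fails to commute with at most `2i` of the terms. -/
theorem iterated_commutator_norm_bound
    {E : Type*} [NormedAddCommGroup E] [InnerProductSpace ℂ E] [FiniteDimensional ℂ E]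
    (n : ℕ) (H : Fin n → (E →L[ℂ] E))
    (hnorm : ∀ j, ‖H j‖ ≤ 1)
    (hloc : ∀ L : List (Fin n),
      Nat.card {j : Fin n // ¬ Commute (H j) ((L.map H).prod)} ≤ 2 * L.length)
    (T : Finset (Fin n)) (hT : T.card = 2)
    (S A : E →L[ℂ] E) (hS : S = ∑ j, H j) (hA : A = ∑ j ∈ T, H j)
    (Q : ℕ → (E →L[ℂ] E)) (hQ0 : Q 0 = A)
    (hQ : ∀ i, Q (i + 1) = (S - A) * Q i - Q i * (S - A)) :
    ∀ i, ‖Q i‖ ≤ 2 * 4 ^ i * (Nat.factorial i) := by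
  classical
  -- products of norm-one operators have norm at most one
  have hprod : ∀ L : List (Fin n), ‖(L.map H).prod‖ ≤ 1 := by
    intro L
    induction L with
    | nil =>
        simp only [List.map_nil, List.prod_nil]
        rw [ContinuousLinearMap.one_def]
        exact ContinuousLinearMap.norm_id_le
    | cons a t ih =>
        simp only [List.map_cons, List.prod_cons]
        calc ‖H a * (t.map H).prod‖ ≤ ‖H a‖ * ‖(t.map H).prod‖ := norm_mul_le _ _
          _ ≤ 1 * 1 := mul_le_mul (hnorm a) ih (norm_nonneg _) zero_le_one
          _ = 1 := one_mul 1
  set B : E →L[ℂ] E := S - A with hBdef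
  have hB : B = ∑ j ∈ Finset.univ \ T, H j := by
    rw [hBdef, hS, hA, ← Finset.sum_sdiff (Finset.subset_univ T), add_sub_cancel_right]
  -- the "good term" predicate
  set Good : ℕ → (E →L[ℂ] E) → Prop := fun m x =>
    ∃ L : List (Fin n), L.length = m ∧ (x = (L.map H).prod ∨ x = -((L.map H).prod))
    with hGood
  -- commutator expansion over noncommuting terms
  have hcomm : ∀ L : List (Fin n),
      B * (L.map H).prod - (L.map H).prod * B
        = ∑ j ∈ (Finset.univ \ T).filter (fun j => ¬ Commute (H j) ((L.map H).prod)),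
            (H j * (L.map H).prod - (L.map H).prod * H j) := by
    intro L
    set W := (L.map H).prod with hW
    rw [hB, Finset.sum_mul, Finset.mul_sum, ← Finset.sum_sub_distrib]
    symm
    apply Finset.sum_filter_of_ne
    intro j hj hne hc
    exact hne (by rw [hc.eq, sub_self])
  have hcard : ∀ L : List (Fin n),
      ((Finset.univ \ T).filter (fun j => ¬ Commute (H j) ((L.map H).prod))).card
        ≤ 2 * L.length := by
    intro L
    calc ((Finset.univ \ T).filter (fun j => ¬ Commute (H j) ((L.map H).prod))).card
        ≤ ((Finset.univ).filter (fun j => ¬ Commute (H j) ((L.map H).prod))).card :=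
          Finset.card_le_card (Finset.filter_subset_filter _ (Finset.sdiff_subset))
      _ = Nat.card {j : Fin n // ¬ Commute (H j) ((L.map H).prod)} := by
          rw [Nat.card_eq_fintype_card, Fintype.card_subtype]
      _ ≤ 2 * L.length := hloc L
  -- expansion of the commutator of B with a single good term
  have hexp : ∀ (m : ℕ) (x : E →L[ℂ] E), Good m x →
      ∃ lx : List (E →L[ℂ] E), lx.sum = B * x - x * B ∧ lx.length ≤ 4 * m ∧
        ∀ y ∈ lx, Good (m + 1) y := by
    intro m x hx
    obtain ⟨L, hL, hxx⟩ := hx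
    set W := (L.map H).prod with hW
    set F := (Finset.univ \ T).filter (fun j => ¬ Commute (H j) W) with hF
    have hlen : ∀ f g : Fin n → (E →L[ℂ] E),
        (F.toList.flatMap (fun j => [f j, g j])).length ≤ 4 * m := by
      intro f g
      rw [length_pair_flatMap, Finset.length_toList]
      calc 2 * F.card ≤ 2 * (2 * L.length) := by
            exact Nat.mul_le_mul_left 2 (hcard L)
        _ = 4 * m := by rw [hL]; ring
    have hgood1 : ∀ j : Fin n, Good (m + 1) (H j * W) := by
      intro j
      exact ⟨j :: L, by simp [hL], Or.inl (by simp [hW])⟩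
    have hgood2 : ∀ j : Fin n, Good (m + 1) (W * H j) := by
      intro j
      exact ⟨L ++ [j], by simp [hL], Or.inl (by simp [hW])⟩
    have hgoodneg : ∀ (m' : ℕ) (y : E →L[ℂ] E), Good m' y → Good m' (-y) := by
      rintro m' y ⟨L', h1, h2 | h2⟩
      · exact ⟨L', h1, Or.inr (by rw [h2])⟩
      · exact ⟨L', h1, Or.inl (by rw [h2, neg_neg])⟩
    rcases hxx with h | h
    · refine ⟨F.toList.flatMap (fun j => [H j * W, -(W * H j)]), ?_, hlen _ _, ?_⟩
      · rw [sum_pair_flatMap, Finset.sum_map_toList, h, hcomm L]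
        exact Finset.sum_congr rfl fun j _ => by abel
      · intro y hy
        simp only [List.mem_flatMap, List.mem_cons, List.not_mem_nil, or_false] at hy
        obtain ⟨j, _, rfl | rfl⟩ := hy
        · exact hgood1 j
        · exact hgoodneg _ _ (hgood2 j)
    · refine ⟨F.toList.flatMap (fun j => [-(H j * W), W * H j]), ?_, hlen _ _, ?_⟩
      · rw [sum_pair_flatMap, Finset.sum_map_toList, h]
        have h2 : ∑ j ∈ F, (-(H j * W) + W * H j) = -(B * W - W * B) := by
          rw [hcomm L, ← Finset.sum_neg_distrib]
          exact Finset.sum_congr rfl fun j _ => by abel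
        rw [h2]
        noncomm_ring
      · intro y hy
        simp only [List.mem_flatMap, List.mem_cons, List.not_mem_nil, or_false] at hy
        obtain ⟨j, _, rfl | rfl⟩ := hy
        · exact hgoodneg _ _ (hgood1 j)
        · exact hgood2 j
  -- expansion of a whole list
  have hstep : ∀ (m : ℕ) (ℓ : List (E →L[ℂ] E)), (∀ x ∈ ℓ, Good m x) →
      ∃ ℓ' : List (E →L[ℂ] E), ℓ'.sum = B * ℓ.sum - ℓ.sum * B ∧
        ℓ'.length ≤ ℓ.length * (4 * m) ∧ ∀ y ∈ ℓ', Good (m + 1) y := by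
    intro m ℓ
    induction ℓ with
    | nil => exact fun _ => ⟨[], by simp, by simp, by simp⟩
    | cons x t ih =>
        intro h
        obtain ⟨lx, hlx1, hlx2, hlx3⟩ := hexp m x (h x (by simp))
        obtain ⟨lt, hlt1, hlt2, hlt3⟩ := ih (fun y hy => h y (by simp [hy]))
        refine ⟨lx ++ lt, ?_, ?_, ?_⟩
        · rw [List.sum_append, hlx1, hlt1, List.sum_cons]
          noncomm_ring
        · rw [List.length_append, List.length_cons]
          calc lx.length + lt.length ≤ 4 * m + t.length * (4 * m) := add_le_add hlx2 hlt2
            _ = (t.length + 1) * (4 * m) := by ring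
        · intro y hy
          rcases List.mem_append.mp hy with hy | hy
          · exact hlx3 y hy
          · exact hlt3 y hy
  -- main invariant
  have key : ∀ i : ℕ, ∃ ℓ : List (E →L[ℂ] E), Q i = ℓ.sum ∧
      ℓ.length ≤ 2 * 4 ^ i * i.factorial ∧ ∀ x ∈ ℓ, Good (i + 1) x := by
    intro i
    induction i with
    | zero =>
        refine ⟨T.toList.map H, ?_, ?_, ?_⟩
        · rw [hQ0, hA, Finset.sum_map_toList]
        · simp [hT]
        · intro x hx
          obtain ⟨j, _, rfl⟩ := List.mem_map.mp hx
          exact ⟨[j], by simp, Or.inl (by simp)⟩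
    | succ i ih =>
        obtain ⟨ℓ, h1, h2, h3⟩ := ih
        obtain ⟨ℓ', g1, g2, g3⟩ := hstep (i + 1) ℓ h3
        refine ⟨ℓ', ?_, ?_, g3⟩
        · rw [hQ i, h1, ← g1]
        · calc ℓ'.length ≤ ℓ.length * (4 * (i + 1)) := g2
            _ ≤ (2 * 4 ^ i * i.factorial) * (4 * (i + 1)) :=
                Nat.mul_le_mul_right _ h2
            _ = 2 * 4 ^ (i + 1) * (i + 1).factorial := by
                rw [Nat.factorial_succ, pow_succ]; ring
  -- conclude
  intro i
  obtain ⟨ℓ, h1, h2, h3⟩ := key i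
  have hx1 : ∀ x ∈ ℓ, ‖x‖ ≤ 1 := by
    intro x hx
    obtain ⟨L, _, h | h⟩ := h3 x hx
    · rw [h]; exact hprod L
    · rw [h, norm_neg]; exact hprod L
  calc ‖Q i‖ = ‖ℓ.sum‖ := by rw [h1]
    _ ≤ ℓ.length := list_norm_sum_le ℓ hx1
    _ ≤ ((2 * 4 ^ i * i.factorial : ℕ) : ℝ) := by exact_mod_cast h2
    _ = 2 * 4 ^ i * (i.factorial : ℝ) := by push_cast; ring
end

section
/- Let X be a self-adjoint operator on a finite-dimensional Hilbert space, let P_u and P_t be its spectral projections onto eigenvalues ≤ u and ≤ t respectively with t ≥ u, let r = 1/8, and let A be any operator. Then ‖(1 − P_t) A P_u‖ ≤ e^{−r(t−u)}·‖e^{rX} A e^{−rX}‖. -/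
open ContinuousLinearMap NormedSpace RCLike

lemma my_comp_ofReal {F : Type*} [NormedAddCommGroup F] [NormedSpace ℂ F]
    {f : ℂ → F} {f' : F} {z : ℝ} (hf : HasDerivAt f f' ↑z) :
    HasDerivAt (fun t : ℝ => f ↑t) f' z := by
  simpa [Function.comp_def] using (hf.hasFDerivAt.restrictScalars ℝ).comp_hasDerivAt z Complex.ofRealCLM.hasDerivAt

lemma key_bound {E : Type*} [NormedAddCommGroup E] [InnerProductSpace ℂ E]
    [FiniteDimensional ℂ E]
    (X P : E →L[ℂ] E) (c : ℝ) (hP : IsSelfAdjoint P) (hP2 : P * P = P) (hPX : X * P = P * X)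
    (hpos : ((c : ℂ) • P - P * X * P).IsPositive) (s : ℝ) (hs : 0 ≤ s) :
    ‖exp ((s : ℂ) • X) * P‖ ≤ Real.exp (s * c) := by
  have hPsym : (P : E →ₗ[ℂ] E).IsSymmetric :=
    (isSelfAdjoint_iff_isSymmetric).mp hP
  have hsym' : ∀ a b : E, (inner ℂ (P a) b : ℂ) = inner ℂ a (P b) := fun a b => hPsym a b
  -- P is a contraction
  have hPcontr : ∀ x : E, ‖P x‖ ≤ ‖x‖ := by
    intro x
    have hPP : P (P x) = P x :=
      (ContinuousLinearMap.mul_apply P P x).symm.trans (ContinuousLinearMap.ext_iff.1 hP2 x)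
    have h1 : (inner ℂ (P x) (P x) : ℂ) = inner ℂ (P x) x := by
      rw [← hsym' (P x) x, hPP]
    have h2 : ‖P x‖ ^ 2 = re (inner ℂ (P x) x : ℂ) := by
      rw [← h1, inner_self_eq_norm_sq]
    have h3 : re (inner ℂ (P x) x : ℂ) ≤ ‖P x‖ * ‖x‖ := re_inner_le_norm (P x) x
    nlinarith [norm_nonneg (P x), norm_nonneg x]
  -- the pointwise quadratic form bound on range P
  have hquad : ∀ w : E, P w = w → re (inner ℂ (X w) w : ℂ) ≤ c * ‖w‖ ^ 2 := by
    intro w hw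
    have h0 := hpos.2 w
    have he : (((c : ℂ) • P - P * X * P) w) = (c : ℂ) • w - P (X w) := by
      simp [ContinuousLinearMap.sub_apply, ContinuousLinearMap.smul_apply,
        ContinuousLinearMap.mul_apply, hw]
    rw [ContinuousLinearMap.reApplyInnerSelf_apply, he, inner_sub_left, inner_smul_left,
      hsym' (X w) w, hw, Complex.conj_ofReal] at h0
    have hre : re ((c : ℂ) * (inner ℂ w w : ℂ)) = c * re (inner ℂ w w : ℂ) := by
      simp [RCLike.re_to_complex, Complex.re_ofReal_mul]
    rw [map_sub, hre, inner_self_eq_norm_sq] at h0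
    linarith
  have hcX : Commute X P := hPX
  refine opNorm_le_bound _ (Real.exp_nonneg _) fun x => ?_
  set y : ℝ → E := fun w => exp ((w : ℂ) • X) (P x) with hy
  have hyP : ∀ w : ℝ, P (y w) = y w := by
    intro w
    have hcw : Commute (exp ((w : ℂ) • X)) P := Commute.exp_left (hcX.smul_left (w : ℂ))
    have h1 : P * exp ((w : ℂ) • X) * P = exp ((w : ℂ) • X) * P := by
      rw [← hcw.eq, mul_assoc, hP2]
    have h2 := ContinuousLinearMap.ext_iff.1 h1 x
    simpa [ContinuousLinearMap.mul_apply, hy] using h2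
  have hyderiv : ∀ w : ℝ, HasDerivAt y (X (y w)) w := by
    intro w
    have h1 : HasDerivAt (fun z : ℂ => exp (z • X)) (exp ((w : ℂ) • X) * X) (w : ℂ) :=
      hasDerivAt_exp_smul_const X (w : ℂ)
    have h2 : HasDerivAt (fun t : ℝ => exp ((t : ℂ) • X)) (exp ((w : ℂ) • X) * X) w :=
      my_comp_ofReal h1
    have h3 := ((ContinuousLinearMap.apply ℂ E (P x)).restrictScalars
      ℝ).hasFDerivAt.comp_hasDerivAt w h2
    have hXe : exp ((w : ℂ) • X) * X = X * exp ((w : ℂ) • X) :=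
      (Commute.exp_right ((Commute.refl X).smul_right (w : ℂ))).eq.symm
    have h4 : ((ContinuousLinearMap.apply ℂ E (P x)).restrictScalars ℝ)
        (exp ((w : ℂ) • X) * X) = X (y w) := by
      rw [hXe]; rfl
    rw [h4] at h3
    exact h3
  set g : ℝ → ℝ := fun w => re (inner ℂ (y w) (y w) : ℂ) with hg
  have hgderiv : ∀ w : ℝ, HasDerivAt g (2 * re (inner ℂ (X (y w)) (y w) : ℂ)) w := by
    intro w
    have h := HasDerivAt.inner ℂ (hyderiv w) (hyderiv w)
    have h2 := (RCLike.reCLM (K := ℂ)).hasFDerivAt.comp_hasDerivAt w h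
    refine h2.congr_deriv ?_
    simp only [RCLike.reCLM_apply, map_add]
    rw [inner_re_symm (y w) (X (y w))]
    ring
  set φ : ℝ → ℝ := fun w => Real.exp ((-2 * c) * w) * g w with hφdef
  have hexp : ∀ w : ℝ, HasDerivAt (fun t : ℝ => Real.exp ((-2 * c) * t))
      ((-2 * c) * Real.exp ((-2 * c) * w)) w := by
    intro w
    have h1 : HasDerivAt (fun t : ℝ => (-2 * c) * t) (-2 * c) w := by
      simpa using (hasDerivAt_id w).const_mul (-2 * c)
    have h2 := (Real.hasDerivAt_exp ((-2 * c) * w)).comp w h1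
    refine h2.congr_deriv ?_
    ring
  have hφderiv : ∀ w : ℝ, HasDerivAt φ
      ((-2 * c) * Real.exp ((-2 * c) * w) * g w +
        Real.exp ((-2 * c) * w) * (2 * re (inner ℂ (X (y w)) (y w) : ℂ))) w :=
    fun w => (hexp w).mul (hgderiv w)
  have hmono : Antitone φ := by
    apply antitone_of_deriv_nonpos (fun w => (hφderiv w).differentiableAt)
    intro w
    rw [(hφderiv w).deriv]
    have hq := hquad (y w) (hyP w)
    have hgeq : g w = ‖y w‖ ^ 2 := by rw [hg]; exact inner_self_eq_norm_sq (y w)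
    have hE := Real.exp_pos ((-2 * c) * w)
    have h5 : Real.exp ((-2 * c) * w) * re (inner ℂ (X (y w)) (y w) : ℂ) ≤
        Real.exp ((-2 * c) * w) * (c * ‖y w‖ ^ 2) := mul_le_mul_of_nonneg_left hq hE.le
    rw [hgeq]
    nlinarith [h5]
  have hle := hmono hs
  have hφ0 : φ 0 = ‖P x‖ ^ 2 := by
    have hy0 : y 0 = P x := by
      simp [hy, exp_zero]
    simp [hφdef, hg, hy0, inner_self_eq_norm_sq, ← Complex.ofReal_pow, Complex.ofReal_re]
  have hφs : φ s = Real.exp ((-2 * c) * s) * ‖y s‖ ^ 2 := by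
    simp [hφdef, hg, inner_self_eq_norm_sq, ← Complex.ofReal_pow, Complex.ofReal_re]
  rw [hφ0, hφs] at hle
  have hnorm : ‖(exp ((s : ℂ) • X) * P) x‖ = ‖y s‖ := by
    simp [ContinuousLinearMap.mul_apply, hy]
  rw [hnorm]
  have hPx := hPcontr x
  have hEs := Real.exp_pos ((-2 * c) * s)
  have hexpsq : Real.exp (s * c) * Real.exp (s * c) * Real.exp ((-2 * c) * s) = 1 := by
    rw [← Real.exp_add, ← Real.exp_add]
    norm_num
    ring
  have h7 : ‖P x‖ ^ 2 ≤ ‖x‖ ^ 2 := by nlinarith [hPx, norm_nonneg (P x)]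
  have h8 : Real.exp ((-2 * c) * s) * ‖y s‖ ^ 2 ≤ ‖x‖ ^ 2 := hle.trans h7
  have h9 : ‖y s‖ ^ 2 ≤ (Real.exp (s * c)) ^ 2 * ‖x‖ ^ 2 := by
    have h10 := mul_le_mul_of_nonneg_left h8
      (mul_pos (Real.exp_pos (s * c)) (Real.exp_pos (s * c))).le
    calc ‖y s‖ ^ 2
        = (Real.exp (s * c) * Real.exp (s * c) * Real.exp ((-2 * c) * s)) * ‖y s‖ ^ 2 := by
          rw [hexpsq]; ring
      _ = (Real.exp (s * c) * Real.exp (s * c)) * (Real.exp ((-2 * c) * s) * ‖y s‖ ^ 2) := by ring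
      _ ≤ (Real.exp (s * c) * Real.exp (s * c)) * ‖x‖ ^ 2 := h10
      _ = (Real.exp (s * c)) ^ 2 * ‖x‖ ^ 2 := by ring
  nlinarith [h9, norm_nonneg (y s), mul_nonneg (Real.exp_nonneg (s * c)) (norm_nonneg x),
    sq_nonneg (‖y s‖ - Real.exp (s * c) * ‖x‖), sq_nonneg (‖y s‖ + Real.exp (s * c) * ‖x‖)]

/-- Off-diagonal decay: for spectral projections `P_u`, `P_t` of a self-adjoint `X`
(onto eigenvalues `≤ u` resp. `≤ t`) with `t ≥ u`,
`‖(1 − P_t) A P_u‖ ≤ e^{−r(t−u)} ‖e^{rX} A e^{−rX}‖` for `r = 1/8`. -/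
theorem offdiagonal_decay
    {E : Type*} [NormedAddCommGroup E] [InnerProductSpace ℂ E] [FiniteDimensional ℂ E]
    (X A Pt Pu : E →L[ℂ] E) (t u : ℝ) (htu : u ≤ t)
    (hX : IsSelfAdjoint X)
    (hPt : IsSelfAdjoint Pt) (hPt2 : Pt * Pt = Pt) (hPtX : X * Pt = Pt * X)
    (hPu : IsSelfAdjoint Pu) (hPu2 : Pu * Pu = Pu) (hPuX : X * Pu = Pu * X)
    (hlowu : ((u : ℂ) • Pu - Pu * X * Pu).IsPositive)
    (hhight : ((1 - Pt) * X * (1 - Pt) - (t : ℂ) • (1 - Pt)).IsPositive)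
    (r : ℝ) (hr : r = 1 / 8) :
    ‖(1 - Pt) * A * Pu‖ ≤
      Real.exp (-r * (t - u)) *
        ‖NormedSpace.exp ((r : ℂ) • X) * A * NormedSpace.exp (-((r : ℂ) • X))‖ := by
  have hr0 : 0 ≤ r := by rw [hr]; norm_num
  have hQ : IsSelfAdjoint (1 - Pt) := by
    rw [IsSelfAdjoint, star_sub, star_one, hPt.star_eq]
  have hQ2 : (1 - Pt) * (1 - Pt) = 1 - Pt := by
    rw [sub_mul, one_mul, mul_sub, mul_one, hPt2]; abel
  have hQX : (-X) * (1 - Pt) = (1 - Pt) * (-X) := by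
    have h : X * (1 - Pt) = (1 - Pt) * X := by rw [mul_sub, mul_one, sub_mul, one_mul, hPtX]
    rw [neg_mul, h, mul_neg]
  have hposQ : (((-t : ℝ) : ℂ) • (1 - Pt) - (1 - Pt) * (-X) * (1 - Pt)).IsPositive := by
    convert hhight using 1
    push_cast
    rw [neg_smul, mul_neg, neg_mul]
    abel
  have key1 := key_bound X Pu u hPu hPu2 hPuX hlowu r hr0
  have key2 := key_bound (-X) (1 - Pt) (-t) hQ hQ2 hQX hposQ r hr0
  rw [smul_neg] at key2
  have hinv : exp (-((r : ℂ) • X)) * exp ((r : ℂ) • X) = 1 := by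
    rw [← NormedSpace.exp_add_of_commute_of_mem_ball (𝕂 := ℂ) ((Commute.refl ((r : ℂ) • X)).neg_left)
        ((expSeries_radius_eq_top ℂ (E →L[ℂ] E)).symm ▸ edist_lt_top _ _)
        ((expSeries_radius_eq_top ℂ (E →L[ℂ] E)).symm ▸ edist_lt_top _ _),
      neg_add_cancel, NormedSpace.exp_zero]
  have hcPt : Commute X Pt := hPtX
  have hce' : exp (-((r : ℂ) • X)) * (1 - Pt) = (1 - Pt) * exp (-((r : ℂ) • X)) := by
    have h := Commute.exp_left ((hcPt.smul_left (r : ℂ)).neg_left)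
    exact ((Commute.one_right _).sub_right h).eq
  have hfact : (1 - Pt) * A * Pu =
      (exp (-((r : ℂ) • X)) * (1 - Pt)) *
        (exp ((r : ℂ) • X) * A * exp (-((r : ℂ) • X))) * (exp ((r : ℂ) • X) * Pu) := by
    rw [hce']
    have h1 : ((1 - Pt) * exp (-((r : ℂ) • X))) *
        (exp ((r : ℂ) • X) * A * exp (-((r : ℂ) • X))) * (exp ((r : ℂ) • X) * Pu) =
        (1 - Pt) * ((exp (-((r : ℂ) • X)) * exp ((r : ℂ) • X)) * A *
          ((exp (-((r : ℂ) • X)) * exp ((r : ℂ) • X)) * Pu)) := by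
      noncomm_ring
    rw [h1, hinv]
    noncomm_ring
  calc ‖(1 - Pt) * A * Pu‖
      = ‖(exp (-((r : ℂ) • X)) * (1 - Pt)) *
          (exp ((r : ℂ) • X) * A * exp (-((r : ℂ) • X))) *
          (exp ((r : ℂ) • X) * Pu)‖ := by rw [← hfact]
    _ ≤ ‖exp (-((r : ℂ) • X)) * (1 - Pt)‖ *
          ‖exp ((r : ℂ) • X) * A * exp (-((r : ℂ) • X))‖ *
          ‖exp ((r : ℂ) • X) * Pu‖ :=
        le_trans (norm_mul_le _ _)
          (mul_le_mul_of_nonneg_right (norm_mul_le _ _) (norm_nonneg _))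
    _ ≤ Real.exp (r * (-t)) *
          ‖exp ((r : ℂ) • X) * A * exp (-((r : ℂ) • X))‖ * Real.exp (r * u) :=
        mul_le_mul
          (mul_le_mul key2 le_rfl (norm_nonneg _) (Real.exp_nonneg _)) key1
          (norm_nonneg _) (by positivity)
    _ = Real.exp (-r * (t - u)) *
          ‖exp ((r : ℂ) • X) * A * exp (-((r : ℂ) • X))‖ := by
        rw [show Real.exp (r * (-t)) *
            ‖exp ((r : ℂ) • X) * A * exp (-((r : ℂ) • X))‖ * Real.exp (r * u) =
            (Real.exp (r * (-t)) * Real.exp (r * u)) *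
            ‖exp ((r : ℂ) • X) * A * exp (-((r : ℂ) • X))‖ from by ring,
          ← Real.exp_add]
        congr 1
        ring
end
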